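/- Let i ∈ {2,…,m} and k ∈ {1,…,i}. Let U ⊆ V be nonempty with |U| = p, let N ⊆ N^p⟨U⟩ (N possibly empty), and let W = {w₁,…,w_t} ⊆ N^p⟨U⟩ ∖ N be nonempty, such that (H1) N⟨w_{r+1}⟩ ⊆ N⟨w_r⟩ for all r = 1,…,t−1, and (H2) N⟨v⟩ ⊆ N⟨w_t⟩ for all v ∈ N. Let j₁,…,j_{t+1} ∈ {1,…,i} with j₁ = 1, j_{t+1} = i and j_r ≤ j_{r+1} for all r = 1,…,t. Then the inequality Σ_{u∈U} x_{u,i} + Σ_{v∈N} y_{v,i} + Σ_{r=1}^t Σ_{j=j_r}^{j_{r+1}} y_{w_r,j} + Σ_{v∈N^p⟨U⟩} (p−1)·y_{v,k} + Σ_{q=1}^{p−1} Σ_{v∈N^q⟨U⟩} q·y_{v,k} ≤ p is valid for P (it is satisfied by every feasible 0/1 pair). -/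
import Mathlib


open Finset

namespace LegalSeq

variable {V : Type*}

/-- The generalized neighborhood `N⟨v⟩`: the closed neighborhood of `v` if `v ∈ C`,
the open neighborhood otherwise. -/
noncomputable def gN [Fintype V] (G : SimpleGraph V) (C : Set V) (v : V) : Finset V := by
  classical
  exact (Set.toFinite (if v ∈ C then insert v (G.neighborSet v) else G.neighborSet v)).toFinset

/-- The ambient space `ℝ^{V×{1,…,m}} × ℝ^{V×{1,…,m}}` of the polytope of legal sequences. -/
abbrev Pt (V : Type*) (m : ℕ) := (V × Fin m → ℝ) × (V × Fin m → ℝ)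

/-- Feasible 0/1 pairs `(x, y)` of the formulation `F₁` (constraints (1)-(5)). -/
def Feasible [Fintype V] (G : SimpleGraph V) (C : Set V) (m : ℕ) : Set (Pt V m) :=
  { p | (∀ q, p.1 q = 0 ∨ p.1 q = 1) ∧ (∀ q, p.2 q = 0 ∨ p.2 q = 1) ∧
    (∀ i : Fin m, ∑ v : V, p.2 (v, i) ≤ 1) ∧
    (∀ v : V, ∑ i : Fin m, p.2 (v, i) ≤ 1) ∧
    (∀ (v : V) (i : Fin m) (h : i.1 + 1 < m),
        p.2 (v, ⟨i.1 + 1, h⟩) ≤ ∑ u ∈ gN G C v, (p.1 (u, i) - p.1 (u, ⟨i.1 + 1, h⟩))) ∧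
    (∀ (u : V) (i : Fin m), p.1 (u, i) + ∑ v ∈ gN G C u, p.2 (v, i) ≤ 1) ∧
    (∀ (u : V) (i : Fin m) (h : i.1 + 1 < m), p.1 (u, ⟨i.1 + 1, h⟩) ≤ p.1 (u, i)) }

/-- The polytope of legal sequences: the convex hull of the feasible 0/1 pairs. -/
noncomputable def poly [Fintype V] (G : SimpleGraph V) (C : Set V) (m : ℕ) : Set (Pt V m) :=
  convexHull ℝ (Feasible G C m)

/-- `δ(G;C)`, the minimum cardinality of a generalized neighborhood. -/
noncomputable def gdelta [Fintype V] (G : SimpleGraph V) (C : Set V) : ℕ :=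
  sInf (Set.range fun v : V => (gN G C v).card)

/-- The instance `(G;C)` is twin free if distinct vertices have distinct
generalized neighborhoods. -/
def TwinFree [Fintype V] (G : SimpleGraph V) (C : Set V) : Prop :=
  ∀ u v : V, u ≠ v → gN G C u ≠ gN G C v

/-- The inequality `f p ≤ a` is valid for the polytope and the face it defines has affine
dimension `2nm - 1`, i.e. it is facet-defining. -/
def IsFacet [Fintype V] (G : SimpleGraph V) (C : Set V) (m : ℕ)
    (f : Pt V m → ℝ) (a : ℝ) : Prop :=
  (∀ p ∈ poly G C m, f p ≤ a) ∧
  Module.finrank ℝ ((affineSpan ℝ {p ∈ poly G C m | f p = a}).direction) =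
    2 * Fintype.card V * m - 1

/-- `N^q⟨U⟩`: the set of vertices having exactly `q` generalized neighbors in `U`. -/
noncomputable def NqU [Fintype V] (G : SimpleGraph V) (C : Set V) (U : Finset V) (q : ℕ) :
    Finset V := by
  classical
  exact Finset.univ.filter (fun v => (gN G C v ∩ U).card = q)

lemma mem_gN [Fintype V] (G : SimpleGraph V) (C : Set V) {u v : V} :
    u ∈ gN G C v ↔ G.Adj v u ∨ (u = v ∧ v ∈ C) := by
  classical
  simp only [gN, Set.Finite.mem_toFinset]
  split_ifs with h
  · simp only [Set.mem_insert_iff, SimpleGraph.mem_neighborSet]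
    tauto
  · simp only [SimpleGraph.mem_neighborSet]
    constructor
    · exact Or.inl
    · rintro (hadj | ⟨rfl, hc⟩)
      · exact hadj
      · exact absurd hc h

lemma gN_comm [Fintype V] (G : SimpleGraph V) (C : Set V) {u v : V} :
    u ∈ gN G C v ↔ v ∈ gN G C u := by
  simp only [mem_gN]
  constructor
  · rintro (h | ⟨rfl, h⟩)
    · exact Or.inl h.symm
    · exact Or.inr ⟨rfl, h⟩
  · rintro (h | ⟨rfl, h⟩)
    · exact Or.inl h.symm
    · exact Or.inr ⟨rfl, h⟩

/-- Validity of the `(i,k,U,N,W,j₁,…,j_{t+1})`-inequality (Theorem 10 of the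
paper). Steps are 0-based: `i` represents a step in `{2,…,m}` (so `1 ≤ i.1`), `k ≤ i`,
`j₁ = 1` becomes `jf 0 = ⟨0,_⟩`, and `j_{t+1} = i` becomes `jf (Fin.last t) = i`. -/
theorem general_ineq_valid [Fintype V] (G : SimpleGraph V) (C : Set V)
    (hiso : ∀ w : V, w ∉ C → ∃ z, G.Adj w z)
    (m : ℕ) (hm : m = Fintype.card V - gdelta G C + 1)
    (i k : Fin m) (hi : 1 ≤ i.1) (hk : k ≤ i)
    (U : Finset V) (hU : U.Nonempty)
    (N : Finset V) (hN : N ⊆ NqU G C U U.card)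
    (t : ℕ) (ht : 1 ≤ t)
    (w : Fin t → V) (hwinj : Function.Injective w)
    (hwmem : ∀ r : Fin t, w r ∈ NqU G C U U.card ∧ w r ∉ N)
    (hH1 : ∀ (r : ℕ) (hr : r + 1 < t),
      gN G C (w ⟨r + 1, hr⟩) ⊆ gN G C (w ⟨r, Nat.lt_of_succ_lt hr⟩))
    (hH2 : ∀ v ∈ N, gN G C v ⊆ gN G C (w ⟨t - 1, by omega⟩))
    (jf : Fin (t + 1) → Fin m)
    (hj0 : jf 0 = ⟨0, by omega⟩) (hjlast : jf (Fin.last t) = i)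
    (hjmono : ∀ r : Fin t, jf r.castSucc ≤ jf r.succ)
    (hjle : ∀ r : Fin (t + 1), jf r ≤ i) :
    ∀ p ∈ poly G C m,
      (∑ u ∈ U, p.1 (u, i)) + (∑ v ∈ N, p.2 (v, i)) +
        (∑ r : Fin t, ∑ j ∈ Finset.Icc (jf r.castSucc) (jf r.succ), p.2 (w r, j)) +
        (∑ v ∈ NqU G C U U.card, ((U.card : ℝ) - 1) * p.2 (v, k)) +
        (∑ q ∈ Finset.Icc 1 (U.card - 1), ∑ v ∈ NqU G C U q, (q : ℝ) * p.2 (v, k)) ≤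
      (U.card : ℝ) := by
  classical
  -- chain of neighborhoods along `w`
  have hchain : ∀ (b : ℕ) (hb : b < t) (a : ℕ) (hab : a ≤ b),
      gN G C (w ⟨b, hb⟩) ⊆ gN G C (w ⟨a, lt_of_le_of_lt hab hb⟩) := by
    intro b
    induction b with
    | zero =>
      intro hb a hab
      have ha : a = 0 := Nat.le_zero.mp hab
      subst ha
      exact subset_rfl
    | succ n ih =>
      intro hb a hab
      rcases Nat.eq_or_lt_of_le hab with heq | hlt'
      · subst heq; exact subset_rfl
      · have hn : n < t := Nat.lt_of_succ_lt hb
        exact (hH1 n hb).trans (ih hn a (Nat.lt_succ_iff.mp hlt'))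
  have hchainF : ∀ (r s : Fin t), r ≤ s → gN G C (w s) ⊆ gN G C (w r) := by
    intro r s hrs
    have := hchain s.1 s.2 r.1 hrs
    simpa using this
  have hNsub : ∀ v ∈ N, ∀ (r : Fin t), gN G C v ⊆ gN G C (w r) := by
    intro v hv r
    have hr2 := r.2
    exact (hH2 v hv).trans (hchain (t - 1) (by omega) r.1 (by omega))
  -- monotonicity of jf
  have hjf : ∀ (a b : Fin (t + 1)), a ≤ b → jf a ≤ jf b := by
    have key2 : ∀ (d : ℕ) (hd : d < t + 1) (c : ℕ) (hc : c ≤ d),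
        jf ⟨c, lt_of_le_of_lt hc hd⟩ ≤ jf ⟨d, hd⟩ := by
      intro d
      induction d with
      | zero =>
        intro hd c hc
        have : c = 0 := Nat.le_zero.mp hc
        subst this
        exact le_refl _
      | succ n ih =>
        intro hd c hc
        rcases Nat.eq_or_lt_of_le hc with heq | hlt'
        · subst heq; exact le_refl _
        · have hn : n < t + 1 := Nat.lt_of_succ_lt hd
          refine le_trans (ih hn c (Nat.lt_succ_iff.mp hlt')) ?_
          have hnt : n < t := by omega
          have := hjmono ⟨n, hnt⟩
          simpa [Fin.castSucc_mk, Fin.succ_mk] using this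
    intro a b hab
    have := key2 b.1 b.2 a.1 hab
    simpa using this
  have hUsubgN : ∀ v ∈ NqU G C U U.card, U ⊆ gN G C v := by
    intro v hv
    have hc : (gN G C v ∩ U).card = U.card := by simpa [NqU] using hv
    have heq := Finset.eq_of_subset_of_card_le (Finset.inter_subset_right
      (s₁ := gN G C v) (s₂ := U)) (le_of_eq hc.symm)
    intro u hu
    have hu' : u ∈ gN G C v ∩ U := heq.symm ▸ hu
    exact (Finset.mem_inter.mp hu').1
  have hpc1 : 1 ≤ U.card := Finset.card_pos.mpr hU
  -- validity on the feasible 0/1 points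
  have key : ∀ z ∈ Feasible G C m,
      (∑ u ∈ U, z.1 (u, i)) + (∑ v ∈ N, z.2 (v, i)) +
        (∑ r : Fin t, ∑ j ∈ Finset.Icc (jf r.castSucc) (jf r.succ), z.2 (w r, j)) +
        (∑ v ∈ NqU G C U U.card, ((U.card : ℝ) - 1) * z.2 (v, k)) +
        (∑ q ∈ Finset.Icc 1 (U.card - 1), ∑ v ∈ NqU G C U q, (q : ℝ) * z.2 (v, k)) ≤
      (U.card : ℝ) := by
    intro z hz
    obtain ⟨hx01, hy01, h1, h2, h3, h4, h5⟩ := hz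
    have hx0 : ∀ q, (0:ℝ) ≤ z.1 q := by
      intro q; rcases hx01 q with h | h <;> rw [h] <;> norm_num
    have hx1 : ∀ q, z.1 q ≤ 1 := by
      intro q; rcases hx01 q with h | h <;> rw [h] <;> norm_num
    have hy0 : ∀ q, (0:ℝ) ≤ z.2 q := by
      intro q; rcases hy01 q with h | h <;> rw [h] <;> norm_num
    have hy1 : ∀ q, z.2 q ≤ 1 := by
      intro q; rcases hy01 q with h | h <;> rw [h] <;> norm_num
    -- monotonicity of x in time
    have hmono : ∀ (u : V) (b : ℕ) (hb : b < m) (a : ℕ) (hab : a ≤ b),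
        z.1 (u, ⟨b, hb⟩) ≤ z.1 (u, ⟨a, lt_of_le_of_lt hab hb⟩) := by
      intro u b
      induction b with
      | zero =>
        intro hb a hab
        have : a = 0 := Nat.le_zero.mp hab
        subst this
        exact le_refl _
      | succ n ih =>
        intro hb a hab
        rcases Nat.eq_or_lt_of_le hab with heq | hlt
        · subst heq; exact le_refl _
        · have hn : n < m := Nat.lt_of_succ_lt hb
          exact le_trans (h5 u ⟨n, hn⟩ hb) (ih hn a (Nat.lt_succ_iff.mp hlt))
    have hmono' : ∀ (u : V) (a b : Fin m), a ≤ b → z.1 (u, b) ≤ z.1 (u, a) := by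
      intro u a b hab
      have := hmono u b.1 b.2 a.1 hab
      simpa using this
    have hxzero : ∀ (u : V) (a b : Fin m), a ≤ b → z.1 (u, a) = 0 → z.1 (u, b) = 0 := by
      intro u a b hab h0
      have h := hmono' u a b hab
      rw [h0] at h
      exact le_antisymm h (hx0 _)
    -- constraint (4): a fired vertex kills its neighborhood
    have hkill : ∀ (v : V) (j : Fin m), z.2 (v, j) = 1 → ∀ u ∈ gN G C v, z.1 (u, j) = 0 := by
      intro v j hyv u hu
      have hvu : v ∈ gN G C u := (gN_comm G C).mp hu
      have h := h4 u j
      have hsum : (1:ℝ) ≤ ∑ v' ∈ gN G C u, z.2 (v', j) := by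
        rw [← hyv]
        exact Finset.single_le_sum (f := fun v' => z.2 (v', j)) (fun q _ => hy0 _) hvu
      have := hx0 (u, j)
      linarith
    -- constraint (1): one firing per step
    have huniq : ∀ (j : Fin m) (v₁ v₂ : V), v₁ ≠ v₂ → z.2 (v₁, j) = 1 → z.2 (v₂, j) = 0 := by
      intro j v₁ v₂ hne hyv
      by_contra hc
      have hy2 : z.2 (v₂, j) = 1 := (hy01 _).resolve_left hc
      have h := Finset.sum_le_sum_of_subset_of_nonneg (f := fun v => z.2 (v, j))
        (Finset.subset_univ ({v₁, v₂} : Finset V)) (fun q _ _ => hy0 _)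
      rw [Finset.sum_pair hne] at h
      have h1' := h1 j
      rw [hyv, hy2] at h
      linarith
    -- constraint (2): each vertex fires at most once
    have huniqv : ∀ (v : V) (j₁ j₂ : Fin m), j₁ ≠ j₂ → z.2 (v, j₁) = 1 → z.2 (v, j₂) = 0 := by
      intro v j₁ j₂ hne hyv
      by_contra hc
      have hy2 : z.2 (v, j₂) = 1 := (hy01 _).resolve_left hc
      have h := Finset.sum_le_sum_of_subset_of_nonneg (f := fun j => z.2 (v, j))
        (Finset.subset_univ ({j₁, j₂} : Finset (Fin m))) (fun q _ _ => hy0 _)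
      rw [Finset.sum_pair hne] at h
      have h2' := h2 v
      rw [hyv, hy2] at h
      linarith
    -- constraint (3): firing needs a fresh neighbor
    have hfresh : ∀ (v : V) (j j' : Fin m), j'.1 + 1 = j.1 → z.2 (v, j) = 1 →
        ∃ u ∈ gN G C v, z.1 (u, j') = 1 := by
      intro v j j' hjj hyv
      have hj2 := j.2
      have hlt : j'.1 + 1 < m := by omega
      have h := h3 v j' hlt
      have hjeq : (⟨j'.1 + 1, hlt⟩ : Fin m) = j := Fin.ext hjj
      rw [hjeq] at h
      by_contra hcon
      push_neg at hcon
      have hnp : ∑ u ∈ gN G C v, (z.1 (u, j') - z.1 (u, j)) ≤ 0 := by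
        apply Finset.sum_nonpos
        intro u hu
        have h0 : z.1 (u, j') = 0 := (hx01 _).resolve_right (hcon u hu)
        have := hx0 (u, j)
        linarith
      rw [hyv] at h
      linarith
    -- two nested firings at different steps is impossible
    have hconflict : ∀ (v₁ v₂ : V) (j₁ j₂ : Fin m), gN G C v₂ ⊆ gN G C v₁ →
        j₁ < j₂ → z.2 (v₁, j₁) = 1 → z.2 (v₂, j₂) = 0 := by
      intro v₁ v₂ j₁ j₂ hsub hlt hy1'
      by_contra hc
      have hy2 : z.2 (v₂, j₂) = 1 := (hy01 _).resolve_left hc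
      have hj2 := j₂.2
      have hltv : j₁.1 < j₂.1 := hlt
      have hjplt : j₂.1 - 1 < m := by omega
      obtain ⟨u, hu, hxu⟩ := hfresh v₂ j₂ ⟨j₂.1 - 1, hjplt⟩
        (show j₂.1 - 1 + 1 = j₂.1 by omega) hy2
      have h0 : z.1 (u, j₁) = 0 := hkill v₁ j₁ hy1' u (hsub hu)
      have hz0 : z.1 (u, ⟨j₂.1 - 1, hjplt⟩) = 0 :=
        hxzero u j₁ ⟨j₂.1 - 1, hjplt⟩ (show j₁.1 ≤ j₂.1 - 1 by omega) h0
      rw [hxu] at hz0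
      norm_num at hz0
    -- abbreviations for the five sums
    set SA := ∑ u ∈ U, z.1 (u, i) with hSA
    set SB := ∑ v ∈ N, z.2 (v, i) with hSB
    set SC := ∑ r : Fin t, ∑ j ∈ Finset.Icc (jf r.castSucc) (jf r.succ), z.2 (w r, j) with hSC
    set SD := ∑ v ∈ NqU G C U U.card, ((U.card : ℝ) - 1) * z.2 (v, k) with hSD
    set SE := ∑ q ∈ Finset.Icc 1 (U.card - 1), ∑ v ∈ NqU G C U q, (q : ℝ) * z.2 (v, k) with hSE
    -- bounds on SD + SE when some vertex meeting U fires at step k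
    have hDEv : ∀ v₀ : V, z.2 (v₀, k) = 1 → 1 ≤ (gN G C v₀ ∩ U).card →
        SD + SE ≤ ((gN G C v₀ ∩ U).card : ℝ) ∧ SD + SE ≤ (U.card : ℝ) - 1 := by
      intro v₀ hy₀ hq1
      have hq₀le : (gN G C v₀ ∩ U).card ≤ U.card :=
        Finset.card_le_card Finset.inter_subset_right
      have hother : ∀ v : V, v ≠ v₀ → z.2 (v, k) = 0 :=
        fun v hv => huniq k v₀ v (Ne.symm hv) hy₀
      rcases eq_or_lt_of_le hq₀le with heq | hlt
      · -- v₀ dominates all of U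
        have hv₀mem : v₀ ∈ NqU G C U U.card := by simp [NqU, heq]
        have hDeq : SD = (U.card : ℝ) - 1 := by
          rw [hSD, Finset.sum_eq_single_of_mem v₀ hv₀mem]
          · rw [hy₀, mul_one]
          · intro b _ hb
            rw [hother b hb, mul_zero]
        have hEeq : SE = 0 := by
          rw [hSE]
          apply Finset.sum_eq_zero
          intro q hq
          apply Finset.sum_eq_zero
          intro v hv
          have hmem : (gN G C v ∩ U).card = q := by simpa [NqU] using hv
          simp only [Finset.mem_Icc] at hq
          have hne : v ≠ v₀ := by
            intro hvv
            subst hvv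
            omega
          rw [hother v hne, mul_zero]
        constructor
        · rw [hDeq, hEeq, heq]
          linarith
        · rw [hDeq, hEeq]
          linarith
      · have hDeq : SD = 0 := by
          rw [hSD]
          apply Finset.sum_eq_zero
          intro v hv
          have hmem : (gN G C v ∩ U).card = U.card := by simpa [NqU] using hv
          have hne : v ≠ v₀ := by
            intro hvv
            subst hvv
            omega
          rw [hother v hne, mul_zero]
        have hEle : SE ≤ ((gN G C v₀ ∩ U).card : ℝ) := by
          rw [hSE]
          have hstep : ∀ q ∈ Finset.Icc 1 (U.card - 1),
              (∑ v ∈ NqU G C U q, (q : ℝ) * z.2 (v, k)) ≤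
              (if q = (gN G C v₀ ∩ U).card then ((gN G C v₀ ∩ U).card : ℝ) else 0) := by
            intro q hq
            by_cases hqq : q = (gN G C v₀ ∩ U).card
            · rw [if_pos hqq, ← hqq]
              calc ∑ v ∈ NqU G C U q, (q:ℝ) * z.2 (v, k)
                  ≤ ∑ v ∈ NqU G C U q, (if v = v₀ then (q:ℝ) else 0) := by
                    apply Finset.sum_le_sum
                    intro v hv
                    by_cases hvv : v = v₀
                    · subst hvv
                      rw [if_pos rfl, hy₀, mul_one]
                    · rw [hother v hvv, mul_zero, if_neg hvv]
                _ ≤ (q:ℝ) := by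
                    rw [Finset.sum_ite_eq' (NqU G C U q) v₀ (fun _ => (q:ℝ))]
                    split_ifs
                    · exact le_refl _
                    · exact Nat.cast_nonneg q
            · rw [if_neg hqq]
              apply le_of_eq
              apply Finset.sum_eq_zero
              intro v hv
              have hmem : (gN G C v ∩ U).card = q := by simpa [NqU] using hv
              have hne : v ≠ v₀ := fun hvv => hqq (by rw [← hmem, hvv])
              rw [hother v hne, mul_zero]
          calc (∑ q ∈ Finset.Icc 1 (U.card - 1), ∑ v ∈ NqU G C U q, (q : ℝ) * z.2 (v, k))
              ≤ ∑ q ∈ Finset.Icc 1 (U.card - 1),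
                  (if q = (gN G C v₀ ∩ U).card then ((gN G C v₀ ∩ U).card : ℝ) else 0) :=
                Finset.sum_le_sum hstep
            _ ≤ ((gN G C v₀ ∩ U).card : ℝ) := by
                rw [Finset.sum_ite_eq' (Finset.Icc 1 (U.card - 1)) ((gN G C v₀ ∩ U).card)
                  (fun _ => ((gN G C v₀ ∩ U).card : ℝ))]
                split_ifs
                · exact le_refl _
                · exact Nat.cast_nonneg _
        have hcast : ((gN G C v₀ ∩ U).card : ℝ) ≤ (U.card : ℝ) - 1 := by
          have : (gN G C v₀ ∩ U).card + 1 ≤ U.card := hlt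
          have h' : ((gN G C v₀ ∩ U).card : ℝ) + 1 ≤ (U.card : ℝ) := by exact_mod_cast this
          linarith
        constructor
        · rw [hDeq]; linarith
        · rw [hDeq]; linarith
    have hDEzero : (∀ v₀ : V, z.2 (v₀, k) = 1 → (gN G C v₀ ∩ U).card = 0) →
        SD = 0 ∧ SE = 0 := by
      intro hno
      constructor
      · rw [hSD]
        apply Finset.sum_eq_zero
        intro v hv
        have hmem : (gN G C v ∩ U).card = U.card := by simpa [NqU] using hv
        have hv0 : z.2 (v, k) = 0 := by
          rcases hy01 (v, k) with h | h
          · exact h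
          · exfalso
            have := hno v h
            omega
        rw [hv0, mul_zero]
      · rw [hSE]
        apply Finset.sum_eq_zero
        intro q hq
        apply Finset.sum_eq_zero
        intro v hv
        have hmem : (gN G C v ∩ U).card = q := by simpa [NqU] using hv
        simp only [Finset.mem_Icc] at hq
        have hv0 : z.2 (v, k) = 0 := by
          rcases hy01 (v, k) with h | h
          · exact h
          · exfalso
            have := hno v h
            omega
        rw [hv0, mul_zero]
    by_cases hfired : (∃ v ∈ N, z.2 (v, i) = 1) ∨
        (∃ r : Fin t, ∃ j ∈ Finset.Icc (jf r.castSucc) (jf r.succ), z.2 (w r, j) = 1)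
    · -- some vertex dominating all of U fired at a step ≤ i
      have hA0 : ∀ (vs : V) (js : Fin m), vs ∈ NqU G C U U.card → js ≤ i →
          z.2 (vs, js) = 1 → SA = 0 := by
        intro vs js hmem hji hy'
        rw [hSA]
        apply Finset.sum_eq_zero
        intro u hu
        have h0 : z.1 (u, js) = 0 := hkill vs js hy' u (hUsubgN vs hmem hu)
        exact hxzero u js i hji h0
      have hDE1 : SD + SE ≤ (U.card : ℝ) - 1 := by
        by_cases hex : ∃ v₀ : V, z.2 (v₀, k) = 1 ∧ 1 ≤ (gN G C v₀ ∩ U).card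
        · obtain ⟨v₀, hy₀, hq1⟩ := hex
          exact (hDEv v₀ hy₀ hq1).2
        · push_neg at hex
          obtain ⟨hd, he⟩ := hDEzero (fun v hv => by have := hex v hv; omega)
          rw [hd, he]
          have : (1:ℝ) ≤ (U.card : ℝ) := by exact_mod_cast hpc1
          linarith
      rcases hfired with ⟨vs, hvsN, hvy⟩ | ⟨r₀, j₀, hj₀, hy₀⟩
      · -- a vertex of N fired at step i
        have hvmem : vs ∈ NqU G C U U.card := hN hvsN
        have hA := hA0 vs i hvmem le_rfl hvy
        have hBle : SB ≤ 1 := by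
          rw [hSB]
          calc ∑ v ∈ N, z.2 (v, i) ≤ ∑ v ∈ N, (if v = vs then (1:ℝ) else 0) := by
                apply Finset.sum_le_sum
                intro v hv
                by_cases hvv : v = vs
                · rw [if_pos hvv]; exact hy1 _
                · rw [if_neg hvv, huniq i vs v (Ne.symm hvv) hvy]
            _ ≤ 1 := by
                rw [Finset.sum_ite_eq' N vs (fun _ => (1:ℝ))]
                split_ifs <;> norm_num
        have hC0 : SC = 0 := by
          rw [hSC]
          apply Finset.sum_eq_zero
          intro r _
          apply Finset.sum_eq_zero
          intro j hj
          obtain ⟨hj1, hj2⟩ := Finset.mem_Icc.mp hj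
          have hji : j ≤ i := le_trans hj2 (hjle r.succ)
          have hwvs : w r ≠ vs := fun h => (hwmem r).2 (h ▸ hvsN)
          rcases eq_or_lt_of_le hji with heq | hlt
          · rw [heq]
            exact huniq i vs (w r) (Ne.symm hwvs) hvy
          · by_contra hc
            have hy1' : z.2 (w r, j) = 1 := (hy01 _).resolve_left hc
            have h0 := hconflict (w r) vs j i (hNsub vs hvsN r) hlt hy1'
            rw [hvy] at h0
            norm_num at h0
        linarith
      · -- some w r₀ fired at step j₀ ≤ i
        have hj₀i : j₀ ≤ i := le_trans (Finset.mem_Icc.mp hj₀).2 (hjle r₀.succ)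
        have hA := hA0 (w r₀) j₀ (hwmem r₀).1 hj₀i hy₀
        have hB0 : SB = 0 := by
          rw [hSB]
          apply Finset.sum_eq_zero
          intro v hv
          have hwv : w r₀ ≠ v := fun h => (hwmem r₀).2 (h ▸ hv)
          rcases eq_or_lt_of_le hj₀i with heq | hlt
          · exact huniq i (w r₀) v hwv (heq ▸ hy₀)
          · exact hconflict (w r₀) v j₀ i (hNsub v hv r₀) hlt hy₀
        have hCle : SC ≤ 1 := by
          have hkey : ∀ r : Fin t, ∀ j ∈ Finset.Icc (jf r.castSucc) (jf r.succ),
              ¬(r = r₀ ∧ j = j₀) → z.2 (w r, j) = 0 := by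
            intro r j hj hne
            obtain ⟨hjl, hjr⟩ := Finset.mem_Icc.mp hj
            obtain ⟨hj₀l, hj₀r⟩ := Finset.mem_Icc.mp hj₀
            rcases Nat.lt_trichotomy r.1 r₀.1 with hrlt | hreq | hrgt
            · -- r before r₀
              have hm1 : jf r.succ ≤ jf r₀.castSucc := by
                apply hjf
                simp only [Fin.le_def, Fin.val_succ, Fin.coe_castSucc]
                omega
              have hjj₀ : j ≤ j₀ := le_trans hjr (le_trans hm1 hj₀l)
              rcases eq_or_lt_of_le hjj₀ with heq | hlt
              · have hwne : w r₀ ≠ w r := fun h =>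
                  (Fin.ne_of_val_ne (show r₀.1 ≠ r.1 by omega)) (hwinj h)
                rw [heq]
                exact huniq j₀ (w r₀) (w r) hwne hy₀
              · by_contra hc
                have hy1' : z.2 (w r, j) = 1 := (hy01 _).resolve_left hc
                have h0 := hconflict (w r) (w r₀) j j₀ (hchainF r r₀ (le_of_lt hrlt)) hlt hy1'
                rw [hy₀] at h0
                norm_num at h0
            · -- r = r₀
              have hreqF : r = r₀ := Fin.ext hreq
              subst hreqF
              have hjne : j ≠ j₀ := fun h => hne ⟨rfl, h⟩
              exact huniqv (w r) j₀ j (Ne.symm hjne) hy₀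
            · -- r after r₀
              have hm1 : jf r₀.succ ≤ jf r.castSucc := by
                apply hjf
                simp only [Fin.le_def, Fin.val_succ, Fin.coe_castSucc]
                omega
              have hjj₀ : j₀ ≤ j := le_trans hj₀r (le_trans hm1 hjl)
              rcases eq_or_lt_of_le hjj₀ with heq | hlt
              · have hwne : w r₀ ≠ w r := fun h =>
                  (Fin.ne_of_val_ne (show r₀.1 ≠ r.1 by omega)) (hwinj h)
                rw [← heq]
                exact huniq j₀ (w r₀) (w r) hwne hy₀
              · exact hconflict (w r₀) (w r) j₀ j (hchainF r₀ r (le_of_lt hrgt)) hlt hy₀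
          rw [hSC]
          calc (∑ r : Fin t, ∑ j ∈ Finset.Icc (jf r.castSucc) (jf r.succ), z.2 (w r, j))
              ≤ ∑ r : Fin t, (if r = r₀ then (1:ℝ) else 0) := by
                apply Finset.sum_le_sum
                intro r _
                by_cases hrr : r = r₀
                · subst hrr
                  rw [if_pos rfl]
                  calc ∑ j ∈ Finset.Icc (jf r.castSucc) (jf r.succ), z.2 (w r, j)
                      ≤ ∑ j ∈ Finset.Icc (jf r.castSucc) (jf r.succ),
                          (if j = j₀ then (1:ℝ) else 0) := by
                        apply Finset.sum_le_sum
                        intro j hj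
                        by_cases hjj : j = j₀
                        · rw [if_pos hjj]; exact hy1 _
                        · rw [if_neg hjj, hkey r j hj (fun h => hjj h.2)]
                    _ ≤ 1 := by
                        rw [Finset.sum_ite_eq' _ j₀ (fun _ => (1:ℝ))]
                        split_ifs <;> norm_num
                · rw [if_neg hrr]
                  apply le_of_eq
                  apply Finset.sum_eq_zero
                  intro j hj
                  exact hkey r j hj (fun h => hrr h.1)
            _ ≤ 1 := by
                rw [Finset.sum_ite_eq' Finset.univ r₀ (fun _ => (1:ℝ))]
                simp
        linarith
    · -- no counted firing: bound SA + SD + SE directly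
      push_neg at hfired
      obtain ⟨hfN, hfW⟩ := hfired
      have hB0 : SB = 0 := by
        rw [hSB]
        exact Finset.sum_eq_zero fun v hv => (hy01 _).resolve_right (hfN v hv)
      have hC0 : SC = 0 := by
        rw [hSC]
        exact Finset.sum_eq_zero fun r _ =>
          Finset.sum_eq_zero fun j hj => (hy01 _).resolve_right (hfW r j hj)
      by_cases hex : ∃ v₀ : V, z.2 (v₀, k) = 1 ∧ 1 ≤ (gN G C v₀ ∩ U).card
      · obtain ⟨v₀, hy₀, hq1⟩ := hex
        have hDE := (hDEv v₀ hy₀ hq1).1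
        have hx0i : ∀ u ∈ gN G C v₀ ∩ U, z.1 (u, i) = 0 := by
          intro u hu
          have h0 : z.1 (u, k) = 0 := hkill v₀ k hy₀ u (Finset.mem_inter.mp hu).1
          exact hxzero u k i hk h0
        have hAle : SA ≤ (U.card : ℝ) - ((gN G C v₀ ∩ U).card : ℝ) := by
          have hsplit := Finset.sum_inter_add_sum_sdiff U (gN G C v₀) (fun u => z.1 (u, i))
          have hzero : ∑ u ∈ U ∩ gN G C v₀, z.1 (u, i) = 0 := by
            apply Finset.sum_eq_zero
            intro u hu
            obtain ⟨hu1, hu2⟩ := Finset.mem_inter.mp hu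
            exact hx0i u (Finset.mem_inter.mpr ⟨hu2, hu1⟩)
          have hbound : ∑ u ∈ U \ gN G C v₀, z.1 (u, i) ≤ ((U \ gN G C v₀).card : ℝ) := by
            calc ∑ u ∈ U \ gN G C v₀, z.1 (u, i) ≤ ∑ _u ∈ U \ gN G C v₀, (1:ℝ) :=
                  Finset.sum_le_sum fun u _ => hx1 _
              _ = ((U \ gN G C v₀).card : ℝ) := by simp
          have hcard := Finset.card_sdiff_add_card_inter U (gN G C v₀)
          have hcomm : (U ∩ gN G C v₀).card = (gN G C v₀ ∩ U).card := by
            rw [Finset.inter_comm]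
          have hcc : ((U \ gN G C v₀).card : ℝ) + ((gN G C v₀ ∩ U).card : ℝ) = (U.card : ℝ) := by
            rw [← hcomm]
            exact_mod_cast hcard
          rw [hSA, ← hsplit, hzero]
          linarith
        linarith
      · push_neg at hex
        obtain ⟨hd, he⟩ := hDEzero (fun v hv => by have := hex v hv; omega)
        have hAle : SA ≤ (U.card : ℝ) := by
          rw [hSA]
          calc ∑ u ∈ U, z.1 (u, i) ≤ ∑ _u ∈ U, (1:ℝ) := Finset.sum_le_sum fun u _ => hx1 _
            _ = (U.card : ℝ) := by simp
        linarith
  -- transfer to the convex hull via a linear functional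
  set F : Pt V m →ₗ[ℝ] ℝ :=
    (∑ u ∈ U, (LinearMap.proj (u, i)).comp (LinearMap.fst ℝ (V × Fin m → ℝ) (V × Fin m → ℝ))) +
    (∑ v ∈ N, (LinearMap.proj (v, i)).comp (LinearMap.snd ℝ (V × Fin m → ℝ) (V × Fin m → ℝ))) +
    (∑ r : Fin t, ∑ j ∈ Finset.Icc (jf r.castSucc) (jf r.succ),
      (LinearMap.proj (w r, j)).comp (LinearMap.snd ℝ (V × Fin m → ℝ) (V × Fin m → ℝ))) +
    (∑ v ∈ NqU G C U U.card, ((U.card : ℝ) - 1) •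
      (LinearMap.proj (v, k)).comp (LinearMap.snd ℝ (V × Fin m → ℝ) (V × Fin m → ℝ))) +
    (∑ q ∈ Finset.Icc 1 (U.card - 1), ∑ v ∈ NqU G C U q, (q : ℝ) •
      (LinearMap.proj (v, k)).comp (LinearMap.snd ℝ (V × Fin m → ℝ) (V × Fin m → ℝ))) with hF
  have hFapply : ∀ z : Pt V m, F z =
      (∑ u ∈ U, z.1 (u, i)) + (∑ v ∈ N, z.2 (v, i)) +
        (∑ r : Fin t, ∑ j ∈ Finset.Icc (jf r.castSucc) (jf r.succ), z.2 (w r, j)) +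
        (∑ v ∈ NqU G C U U.card, ((U.card : ℝ) - 1) * z.2 (v, k)) +
        (∑ q ∈ Finset.Icc 1 (U.card - 1), ∑ v ∈ NqU G C U q, (q : ℝ) * z.2 (v, k)) := by
    intro z
    simp [hF, LinearMap.add_apply, LinearMap.sum_apply, LinearMap.smul_apply,
      LinearMap.comp_apply, LinearMap.proj_apply, LinearMap.fst_apply, LinearMap.snd_apply,
      smul_eq_mul]
  have hsub : Feasible G C m ⊆ {z : Pt V m | F z ≤ (U.card : ℝ)} := by
    intro z hz
    have hk' := key z hz
    simp only [Set.mem_setOf_eq, hFapply z]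
    exact hk'
  intro p hp
  have hmem := convexHull_min hsub
    (convex_halfSpace_le (LinearMap.isLinear F) ((U.card : ℝ))) hp
  have : F p ≤ (U.card : ℝ) := hmem
  rw [hFapply p] at this
  exact this

end LegalSeq
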